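/- Let g ≥ 2, and let R, S be positive divisors of g with (R, g/S) = 1, R ≥ 2, and S ≠ g. Then for any maps α_i : {0,…,g−1} → ℝ and any t ∈ ℝ, the quantity Ψ_i(t,R,S) := g^{−2} Σ_{0≤r<R} φ_{i+1}(g(t+r)/(RS)) Σ_{0≤s<S} φ_i((t+r)/(RS) + s/S) satisfies Ψ_i(t,R,S)² ≤ (2/3)·RS. -/

import Mathlib

/-- `e(t) = exp(2πit)`. -/
noncomputable def eC (t : ℝ) : ℂ := Complex.exp (2 * (Real.pi : ℂ) * Complex.I * (t : ℂ))

/-- `φ_i(β) = |Σ_{0≤n<g} e(α_i(n) − βn)|`. -/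
noncomputable def phi (g : ℕ) (α : ℕ → ℕ → ℝ) (i : ℕ) (β : ℝ) : ℝ :=
  ‖∑ n ∈ Finset.range g, eC (α i n - β * n)‖

/-- The auxiliary function `Ψ_i(t,R,S)`. -/
noncomputable def Psi (g : ℕ) (α : ℕ → ℕ → ℝ) (i : ℕ) (t : ℝ) (R S : ℕ) : ℝ :=
  ((g : ℝ) ^ 2)⁻¹ * ∑ r ∈ Finset.range R,
    phi g α (i + 1) ((g : ℝ) * (t + r) / (R * S)) *
      ∑ s ∈ Finset.range S, phi g α i ((t + r) / (R * S) + (s : ℝ) / S)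

/-!
By Cauchy–Schwarz in `r`, `Ψ² ≤ g⁻⁴ (∑_r φ_{i+1}(g(t+r)/(RS))²) (∑_r (∑_s φ_i(…))²)`, and by
Cauchy–Schwarz in `s`, together with `(t+r)/(RS) + s/S = (t + r + Rs)/(RS)`, the second factor is
at most `S ∑_{k<RS} φ_i((t+k)/(RS))²`. Both factors are mean squares of `φ` over a complete set of
`N`-th fractions (`N = R` with step `g/S`, which is coprime to `R`; `N = RS` with step `1`), and
orthogonality of the additive characters mod `N` gives
`∑_{k<N} φ(β + kc/N)² ≤ N · #{(m, n) ∈ [0, g)² : m ≡ n mod N} ≤ N g (⌊g/N⌋ + 1)`,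
which is exactly `g²` when `N = R` divides `g`. What remains is `3S(⌊g/(RS)⌋ + 1) ≤ 2g`, that is
`3(⌊G/R⌋ + 1) ≤ 2G` for `G = g/S`; it holds because `G ≥ 2` (as `S ≠ g`) and `R ∤ G` (as `R ≥ 2`
is coprime to `G`).
-/

open Finset

theorem eC_eq_exp (t : ℝ) : eC t = Complex.exp (↑(2 * Real.pi * t) * Complex.I) := by
  simp only [eC]; push_cast; ring_nf

theorem eC_add (s t : ℝ) : eC (s + t) = eC s * eC t := by
  simp only [eC_eq_exp, mul_add, Complex.ofReal_add, add_mul, Complex.exp_add]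

theorem norm_eC (t : ℝ) : ‖eC t‖ = 1 := by
  rw [eC_eq_exp, Complex.norm_exp_ofReal_mul_I]

theorem conj_eC (t : ℝ) : (starRingEnd ℂ) (eC t) = eC (-t) := by
  rw [eC_eq_exp, eC_eq_exp, ← Complex.exp_conj, map_mul, Complex.conj_ofReal, Complex.conj_I]
  push_cast; ring_nf

theorem eC_nat_mul (k : ℕ) (t : ℝ) : eC (k * t) = eC t ^ k := by
  rw [eC_eq_exp, eC_eq_exp, ← Complex.exp_nat_mul]
  push_cast; ring_nf

theorem eC_eq_one_iff (t : ℝ) : eC t = 1 ↔ ∃ n : ℤ, t = n := by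
  rw [eC_eq_exp, Complex.exp_eq_one_iff]
  refine exists_congr fun n => ⟨fun h => ?_, fun h => by rw [h]; push_cast; ring⟩
  have h' :
      ((2 * Real.pi * t : ℝ) : ℂ) * Complex.I = ((2 * Real.pi * n : ℝ) : ℂ) * Complex.I := by
    rw [h]; push_cast; ring
  exact mul_left_cancel₀ (by positivity)
    (Complex.ofReal_injective (mul_right_cancel₀ Complex.I_ne_zero h'))

theorem sum_range_eC_mul_div {N c : ℕ} (hc : c.Coprime N) (d : ℤ) :
    ∑ k ∈ range N, eC (k * c * d / N) = if (N : ℤ) ∣ d then (N : ℂ) else 0 := by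
  rcases Nat.eq_zero_or_pos N with rfl | hN
  · simp
  set z := eC (c * d / N)
  have hterm : ∀ k : ℕ, eC (k * c * d / N) = z ^ k := fun k => by
    rw [← eC_nat_mul]; ring_nf
  have hz_eq_one : z = 1 ↔ (N : ℤ) ∣ d := by
    rw [eC_eq_one_iff]
    constructor
    · rintro ⟨n, hn⟩
      have hcd : (c : ℤ) * d = N * n := by
        field_simp at hn; exact_mod_cast hn
      exact (Nat.isCoprime_iff_coprime.2 hc.symm).dvd_of_dvd_mul_left ⟨n, hcd⟩
    · rintro ⟨n, rfl⟩
      exact ⟨c * n, by push_cast; field_simp⟩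
  simp_rw [hterm]
  split_ifs with hd
  · simp [hz_eq_one.2 hd]
  · have hzN : z ^ N = 1 := by
      rw [← eC_nat_mul, eC_eq_one_iff]
      exact ⟨c * d, by field_simp; push_cast; ring⟩
    rw [geom_sum_eq (mt hz_eq_one.1 hd), hzN, sub_self, zero_div]

theorem sum_range_sum_range_add_mul {M : Type*} [AddCommMonoid M] (F : ℕ → M) (R S : ℕ) :
    ∑ r ∈ range R, ∑ s ∈ range S, F (r + R * s) = ∑ k ∈ range (R * S), F k := by
  induction S with
  | zero => simp
  | succ S ih =>
    rw [Nat.mul_succ, sum_range_add, ← ih, ← sum_add_distrib]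
    refine sum_congr rfl fun r _ => ?_
    rw [sum_range_succ, add_comm (R * S) r]

theorem card_range_filter_modEq_le {N : ℕ} (hN : 0 < N) (b m : ℕ) :
    #{n ∈ range b | n ≡ m [MOD N]} ≤ b / N + 1 := by
  rw [← Nat.count_eq_card_filter_range, Nat.count_modEq_card _ hN]
  split_ifs <;> omega

theorem card_range_filter_modEq_of_dvd {N b : ℕ} (hN : 0 < N) (hNb : N ∣ b) (m : ℕ) :
    #{n ∈ range b | n ≡ m [MOD N]} = b / N := by
  rw [← Nat.count_eq_card_filter_range, Nat.count_modEq_card _ hN, Nat.mod_eq_zero_of_dvd hNb]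
  simp

theorem three_mul_div_add_one_le {R G : ℕ} (hR : 2 ≤ R) (hG : 2 ≤ G) (hRG : ¬ R ∣ G) :
    3 * (G / R + 1) ≤ 2 * G := by
  have hdiv := Nat.div_add_mod G R
  have hmod : G % R ≠ 0 := fun h => hRG (Nat.dvd_of_mod_eq_zero h)
  have : 2 * (G / R) ≤ R * (G / R) := Nat.mul_le_mul_right _ hR
  omega

theorem phi_sq_eq (g : ℕ) (α : ℕ → ℕ → ℝ) (i : ℕ) (β : ℝ) :
    ((phi g α i β ^ 2 : ℝ) : ℂ) =
      ∑ m ∈ range g, ∑ n ∈ range g, eC (α i n - α i m - β * (n - m)) := by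
  rw [phi, Complex.ofReal_pow, ← Complex.conj_mul', map_sum, sum_mul_sum]
  refine sum_congr rfl fun m _ => sum_congr rfl fun n _ => ?_
  rw [conj_eC, ← eC_add]
  ring_nf

theorem sum_sq_phi_le {g N c M : ℕ} (hc : c.Coprime N)
    (hM : ∀ m < g, #{n ∈ range g | n ≡ m [MOD N]} ≤ M) (α : ℕ → ℕ → ℝ) (i : ℕ) (β : ℝ) :
    ∑ k ∈ range N, phi g α i (β + k * c / N) ^ 2 ≤ N * g * M := by
  set a : ℕ → ℕ → ℂ := fun m n => eC (α i n - α i m - β * (n - m))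
  have hexpand : ((∑ k ∈ range N, phi g α i (β + k * c / N) ^ 2 : ℝ) : ℂ) =
      N * ∑ m ∈ range g, ∑ n ∈ range g with n ≡ m [MOD N], a m n := by
    calc ((∑ k ∈ range N, phi g α i (β + k * c / N) ^ 2 : ℝ) : ℂ)
        = ∑ m ∈ range g, ∑ n ∈ range g,
            a m n * ∑ k ∈ range N, eC (k * c * ((m : ℤ) - n : ℤ) / N) := by
          simp_rw [Complex.ofReal_sum, phi_sq_eq, mul_sum]
          rw [sum_comm]
          refine sum_congr rfl fun m _ => ?_
          rw [sum_comm]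
          refine sum_congr rfl fun n _ => sum_congr rfl fun k _ => ?_
          rw [← eC_add]
          push_cast; ring_nf
      _ = N * ∑ m ∈ range g, ∑ n ∈ range g with n ≡ m [MOD N], a m n := by
          simp_rw [sum_range_eC_mul_div hc, ← Nat.modEq_iff_dvd, mul_sum, sum_filter]
          refine sum_congr rfl fun m _ => sum_congr rfl fun n _ => ?_
          split_ifs <;> simp [mul_comm]
  have hnorm : ‖∑ m ∈ range g, ∑ n ∈ range g with n ≡ m [MOD N], a m n‖ ≤ g * M := by
    calc ‖∑ m ∈ range g, ∑ n ∈ range g with n ≡ m [MOD N], a m n‖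
        ≤ ∑ m ∈ range g, (#{n ∈ range g | n ≡ m [MOD N]} : ℝ) := by
          refine norm_sum_le_of_le _ fun m _ => (norm_sum_le _ _).trans_eq ?_
          simp [a, norm_eC]
      _ ≤ ∑ _m ∈ range g, (M : ℝ) := by
          gcongr with m hm
          exact_mod_cast hM m (mem_range.1 hm)
      _ = g * M := by simp
  calc ∑ k ∈ range N, phi g α i (β + k * c / N) ^ 2
      = ‖((∑ k ∈ range N, phi g α i (β + k * c / N) ^ 2 : ℝ) : ℂ)‖ := by
        rw [Complex.norm_real, Real.norm_of_nonneg (by positivity)]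
    _ ≤ N * (g * M) := by
        rw [hexpand, norm_mul, Complex.norm_natCast]
        gcongr
    _ = N * g * M := by ring

theorem Psi_sq_le (g : ℕ) (α : ℕ → ℕ → ℝ) (i : ℕ) (t : ℝ) (R S : ℕ) :
    Psi g α i t R S ^ 2 ≤ ((g : ℝ) ^ 2)⁻¹ ^ 2 *
      ((∑ r ∈ range R, phi g α (i + 1) (g * (t + r) / (R * S)) ^ 2) *
        (S * ∑ k ∈ range (R * S), phi g α i ((t + k) / (R * S)) ^ 2)) := by
  rw [Psi, mul_pow]
  gcongr
  refine (sum_mul_sq_le_sq_mul_sq _ _ _).trans ?_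
  gcongr
  rw [← sum_range_sum_range_add_mul, mul_sum]
  refine sum_le_sum fun r hr => (sq_sum_le_card_mul_sum_sq).trans_eq ?_
  rw [card_range]
  congr 1
  refine sum_congr rfl fun s hs => ?_
  have hR : (R : ℝ) ≠ 0 := Nat.cast_ne_zero.2 (Nat.ne_zero_of_lt (mem_range.1 hr))
  have hS : (S : ℝ) ≠ 0 := Nat.cast_ne_zero.2 (Nat.ne_zero_of_lt (mem_range.1 hs))
  congr 2
  push_cast; field_simp; ring

theorem sum_sq_phi_mul_div_le_sq {g R S : ℕ} (hR : R ∣ g) (hS : S ∣ g)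
    (hRS : R.Coprime (g / S)) (α : ℕ → ℕ → ℝ) (i : ℕ) (t : ℝ) :
    ∑ r ∈ range R, phi g α i (g * (t + r) / (R * S)) ^ 2 ≤ (g : ℝ) ^ 2 := by
  rcases Nat.eq_zero_or_pos R with rfl | hR0
  · positivity
  rcases eq_or_ne S 0 with rfl | hS0
  · obtain rfl := zero_dvd_iff.1 hS
    simp [phi]
  have h := sum_sq_phi_le hRS.symm (fun m _ => (card_range_filter_modEq_of_dvd hR0 hR m).le)
    α i (g * t / (R * S))
  calc ∑ r ∈ range R, phi g α i (g * (t + r) / (R * S)) ^ 2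
      = ∑ r ∈ range R, phi g α i (g * t / (R * S) + r * (g / S : ℕ) / R) ^ 2 := by
        refine sum_congr rfl fun r _ => ?_
        rw [Nat.cast_div hS (Nat.cast_ne_zero.2 hS0)]
        field_simp
    _ ≤ R * g * (g / R : ℕ) := h
    _ = (g : ℝ) ^ 2 := by
        rw [Nat.cast_div hR (Nat.cast_ne_zero.2 hR0.ne')]
        field_simp

theorem sum_sq_phi_div_le {g N : ℕ} (hN : 0 < N) (α : ℕ → ℕ → ℝ) (i : ℕ) (t : ℝ) :
    ∑ k ∈ range N, phi g α i ((t + k) / N) ^ 2 ≤ N * g * (g / N + 1 : ℕ) := by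
  have h := sum_sq_phi_le (c := 1) (Nat.coprime_one_left N)
    (fun m _ => card_range_filter_modEq_le hN g m) α i (t / N)
  convert h using 4 with k
  push_cast; ring

theorem three_mul_mul_div_add_one_le {g R S : ℕ} (hS : S ∣ g) (hRS : R.Coprime (g / S))
    (hR2 : 2 ≤ R) (hSg : S ≠ g) : 3 * (S * (g / (R * S) + 1)) ≤ 2 * g := by
  obtain ⟨G, rfl⟩ := hS
  have hS0 : S ≠ 0 := by rintro rfl; simp at hRS; omega
  rw [Nat.mul_div_cancel_left _ (Nat.pos_of_ne_zero hS0)] at hRS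
  have hG0 : G ≠ 0 := by rintro rfl; simp at hRS; omega
  have hG1 : G ≠ 1 := by rintro rfl; simp at hSg
  have hRG : ¬ R ∣ G := fun h => by have := hRS.eq_one_of_dvd h; omega
  have key := three_mul_div_add_one_le hR2 (by omega) hRG
  rw [mul_comm R S, Nat.mul_div_mul_left _ _ (Nat.pos_of_ne_zero hS0)]
  nlinarith

theorem Psi_bound_S_ne_g_general (g : ℕ) (α : ℕ → ℕ → ℝ) (i : ℕ) (t : ℝ)
    (R S : ℕ) (hR : R ∣ g) (hS : S ∣ g) (hRS : Nat.Coprime R (g / S))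
    (hR2 : 2 ≤ R) (hSg : S ≠ g) :
    Psi g α i t R S ^ 2 ≤ (2 / 3 : ℝ) * (R * S) := by
  -- either would make `g / S = 0`, and `R.Coprime 0` forces `R = 1`
  have hS0 : S ≠ 0 := by rintro rfl; simp at hRS; omega
  have hg0 : g ≠ 0 := by rintro rfl; simp at hRS; omega
  set q := g / (R * S)
  have hkey : 3 * ((S : ℝ) * (q + 1)) ≤ 2 * g := by
    exact_mod_cast three_mul_mul_div_add_one_le hS hRS hR2 hSg
  calc Psi g α i t R S ^ 2
      ≤ ((g : ℝ) ^ 2)⁻¹ ^ 2 * ((g : ℝ) ^ 2 * (S * ((R * S : ℕ) * g * (q + 1 : ℕ)))) := by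
        refine (Psi_sq_le g α i t R S).trans ?_
        gcongr
        · exact sum_sq_phi_mul_div_le_sq hR hS hRS α (i + 1) t
        · exact_mod_cast sum_sq_phi_div_le (by positivity) α i t
    _ = (R * S : ℝ) * (S * (q + 1) / g) := by
        push_cast; field_simp
    _ ≤ (2 / 3 : ℝ) * (R * S) := by
        rw [mul_comm (2 / 3 : ℝ)]
        refine mul_le_mul_of_nonneg_left ?_ (by positivity)
        rw [div_le_div_iff₀ (by positivity) (by norm_num)]
        linarith

theorem Psi_bound_S_ne_g (g : ℕ) (hg : 2 ≤ g) (α : ℕ → ℕ → ℝ) (i : ℕ) (t : ℝ)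
    (R S : ℕ) (hR : R ∣ g) (hS : S ∣ g) (hRS : Nat.Coprime R (g / S))
    (hR2 : 2 ≤ R) (hSg : S ≠ g) (hS1 : 1 ≤ S) :
    Psi g α i t R S ^ 2 ≤ (2 / 3 : ℝ) * (R * S) :=
  Psi_bound_S_ne_g_general g α i t R S hR hS hRS hR2 hSg
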